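/- arXiv:math/9309203 — 5 statements merged into one kernel-verified Lean document; each statement's English description precedes it below -/
import Mathlib

section
/- A point x in a compact Hausdorff dynamical system (X, T) is recurrent (i.e., for every neighborhood G of x there are infinitely many n with T^n(x) ∈ G) if and only if there is a nonprincipal ultrafilter U on ℕ with T^U(x) = x. -/
open Filter Topology

theorem Ultrafilter.le_cofinite_iff_not_exists_eq_pure {α : Type*} (U : Ultrafilter α) :
    (U : Filter α) ≤ cofinite ↔ ¬ ∃ a, U = pure a := by
  refine ⟨?_, U.le_cofinite_or_eq_pure.resolve_right⟩
  rintro hU ⟨a, rfl⟩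
  simpa using hU (Set.finite_singleton a).compl_mem_cofinite

theorem mapClusterPt_cofinite_iff_exists_nonprincipal_ultrafilter {α X : Type*}
    [TopologicalSpace X] {u : α → X} {x : X} :
    MapClusterPt x cofinite u ↔ ∃ U : Ultrafilter α, (¬ ∃ a, U = pure a) ∧ Tendsto u U (𝓝 x) := by
  simp only [mapClusterPt_iff_ultrafilter, Ultrafilter.le_cofinite_iff_not_exists_eq_pure]

theorem recurrent_iff_ulim_fixed_general {X : Type*} [TopologicalSpace X]
    (T : X → X) (x : X) :
    (∀ G ∈ nhds x, {n : ℕ | T^[n] x ∈ G}.Infinite) ↔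
      ∃ U : Ultrafilter ℕ, (¬ ∃ a : ℕ, U = pure a) ∧
        Tendsto (fun n => T^[n] x) U (nhds x) := by
  simp only [← mapClusterPt_cofinite_iff_exists_nonprincipal_ultrafilter,
    mapClusterPt_iff_frequently, frequently_cofinite_iff_infinite]

/-- A point `x` in a compact Hausdorff dynamical system is recurrent iff
`T^U(x) = x` for some nonprincipal ultrafilter `U`. -/
theorem recurrent_iff_ulim_fixed {X : Type*} [TopologicalSpace X] [CompactSpace X] [T2Space X]
    (T : X → X) (hT : Continuous T) (x : X) :
    (∀ G ∈ nhds x, {n : ℕ | T^[n] x ∈ G}.Infinite) ↔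
      ∃ U : Ultrafilter ℕ, (¬ ∃ a : ℕ, U = pure a) ∧
        Tendsto (fun n => T^[n] x) U (nhds x) :=
  recurrent_iff_ulim_fixed_general T x
end

section
/- A point x in a compact Hausdorff dynamical system (X, T) is uniformly recurrent (for each neighborhood G of x there is M ∈ ℕ such that for all n there exists k < M with T^(n+k)(x) ∈ G) if and only if for every ultrafilter V on ℕ there is an ultrafilter U on ℕ with T^U(T^V(x)) = x. -/
/-!
Return times of a uniformly recurrent point `x` to a closed neighbourhood `G` are syndetic, so
along any ultrafilter `V` some fixed shift `T^[k]` lands in `G` for `V`-almost every time; by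
continuity `T^[k] (T^V x) ∈ G`, i.e. `x` lies in the orbit closure of `T^V x`, which is what
`T^U (T^V x) = x` means. Conversely, if `x` is not uniformly recurrent, there are orbit segments of
every length `M` avoiding some open neighbourhood of `x`; the limit `y` of their starting points
along a free ultrafilter has its whole orbit outside that neighbourhood, so no `T^U y` is `x`.
-/

open Filter Set Topology

theorem mem_closure_range_iff_exists_ultrafilter {ι X : Type*} [TopologicalSpace X]
    {f : ι → X} {x : X} : x ∈ closure (range f) ↔ ∃ U : Ultrafilter ι, Tendsto f U (𝓝 x) := by
  simp only [tendsto_iff_comap, exists_ultrafilter_iff, comap_neBot_iff, mem_closure_iff_nhds,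
    inter_nonempty, mem_range]
  exact forall₂_congr fun _ _ => ⟨fun ⟨_, hs, a, ha⟩ => ⟨a, ha ▸ hs⟩, fun ⟨a, ha⟩ => ⟨_, ha, a, rfl⟩⟩

section Iterate

variable {X : Type*} [TopologicalSpace X] {T : X → X} {x y : X}

theorem Continuous.tendsto_iterate_add {ι : Type*} {l : Filter ι} {f : ι → ℕ}
    (hT : Continuous T) (h : Tendsto (fun i => T^[f i] x) l (𝓝 y)) (k : ℕ) :
    Tendsto (fun i => T^[f i + k] x) l (𝓝 (T^[k] y)) := by
  simpa only [add_comm _ k, Function.iterate_add_apply, Function.comp_def] using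
    ((hT.iterate k).tendsto y).comp h

theorem mem_closure_range_iterate_of_tendsto [RegularSpace X] (hT : Continuous T)
    (hx : ∀ G ∈ 𝓝 x, ∃ M : ℕ, ∀ n : ℕ, ∃ k < M, T^[n + k] x ∈ G) {V : Ultrafilter ℕ}
    (hy : Tendsto (fun n => T^[n] x) V (𝓝 y)) : x ∈ closure (range fun k => T^[k] y) := by
  refine mem_closure_iff_nhds.2 fun W hW => ?_
  obtain ⟨G, hG, hG_closed, hGW⟩ := exists_mem_nhds_isClosed_subset hW
  obtain ⟨M, hM⟩ := hx G hG
  have hcover : (⋃ k ∈ Iio M, {n : ℕ | T^[n + k] x ∈ G}) ∈ V :=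
    univ_mem' fun n => by simpa only [mem_iUnion, exists_prop, mem_Iio, mem_ofPred_eq] using hM n
  obtain ⟨k, -, hk⟩ := (Ultrafilter.finite_biUnion_mem_iff (finite_Iio M)).1 hcover
  exact ⟨T^[k] y, hGW (hG_closed.mem_of_tendsto (hT.tendsto_iterate_add hy k) hk), k, rfl⟩

theorem iterate_notMem_of_tendsto {s : Set X} (hs : IsOpen s) (hT : Continuous T)
    {n : ℕ → ℕ} (hn : ∀ M, ∀ k < M, T^[n M + k] x ∉ s) {l : Filter ℕ} [l.NeBot]
    (hl : l ≤ atTop) (hy : Tendsto (fun M => T^[n M] x) l (𝓝 y)) (k : ℕ) : T^[k] y ∉ s :=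
  hs.isClosed_compl.mem_of_tendsto (hT.tendsto_iterate_add hy k)
    (((eventually_gt_atTop k).filter_mono hl).mono fun M hM => hn M k hM)

end Iterate

/-- A point `x` in a compact Hausdorff dynamical system is uniformly recurrent iff
for every ultrafilter `V` there is an ultrafilter `U` with `T^U(T^V(x)) = x`. -/
theorem uniformlyRecurrent_iff {X : Type*} [TopologicalSpace X] [CompactSpace X] [T2Space X]
    (T : X → X) (hT : Continuous T) (x : X) :
    (∀ G ∈ nhds x, ∃ M : ℕ, ∀ n : ℕ, ∃ k < M, T^[n + k] x ∈ G) ↔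
      ∀ V : Ultrafilter ℕ, ∃ U : Ultrafilter ℕ, ∃ y : X,
        Tendsto (fun n => T^[n] x) V (nhds y) ∧
        Tendsto (fun n => T^[n] y) U (nhds x) := by
  constructor
  · intro hx V
    have hy := (V.map fun n => T^[n] x).le_nhds_lim
    obtain ⟨U, hU⟩ := mem_closure_range_iff_exists_ultrafilter.1
      (mem_closure_range_iterate_of_tendsto hT hx hy)
    exact ⟨U, _, hy, hU⟩
  · contrapose!
    rintro ⟨G, hG, hfar⟩
    choose n hn using hfar
    refine ⟨(hyperfilter ℕ).map n, fun U y hy hU => ?_⟩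
    have hy_far := iterate_notMem_of_tendsto isOpen_interior hT
      (fun M k hk hmem => hn M k hk (interior_subset hmem)) Nat.hyperfilter_le_atTop hy
    obtain ⟨k, hk⟩ := U.nonempty_of_mem (hU (interior_mem_nhds.2 hG))
    exact hy_far k hk
end

section
/- Two points x, y in a compact Hausdorff dynamical system (X, T) are proximal (for every neighborhood G of the diagonal in X × X, infinitely many n satisfy (T^n(x), T^n(y)) ∈ G) if and only if there is an ultrafilter U on ℕ with T^U(x) = T^U(y). -/
/-!
If `(Tⁿx, Tⁿy)` enters every neighbourhood of the diagonal, the preimages of these neighbourhoods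
generate a proper filter on `ℕ`; along an ultrafilter refining it, `(Tⁿx, Tⁿy)` converges by
compactness, and the limit lies on the closed diagonal. Conversely, if both orbits converge to `z`
along `U`, each set `{n | (Tⁿx, Tⁿy) ∈ G}` belongs to `U`. It is infinite unless `U` is principal,
say `U = pure n`; but then `Tⁿx = z = Tⁿy`, so the orbits agree from time `n` on.
-/

open Filter Topology Set

theorem IsClosed.mem_of_tendsto_nhds_of_tendsto_nhdsSet {α X : Type*} [TopologicalSpace X]
    [RegularSpace X] {l : Filter α} [l.NeBot] {f : α → X} {s : Set X} {p : X}
    (hs : IsClosed s) (hp : Tendsto f l (𝓝 p)) (hf : Tendsto f l (𝓝ˢ s)) : p ∈ s := by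
  by_contra hps
  have hdisj : Disjoint (𝓝ˢ s) (𝓝 p) := disjoint_nhdsSet_nhds.mpr (by rwa [hs.closure_eq])
  exact hf.not_tendsto hdisj hp

theorem exists_ultrafilter_tendsto_diagonal {α X : Type*} [TopologicalSpace X] [CompactSpace X]
    [T2Space X] {f : α → X × X} (hf : (comap f (𝓝ˢ (diagonal X))).NeBot) :
    ∃ (U : Ultrafilter α) (z : X), Tendsto f U (𝓝 (z, z)) := by
  set U := Ultrafilter.of (comap f (𝓝ˢ (diagonal X)))
  obtain ⟨⟨z, z'⟩, -, hp⟩ := isCompact_univ.ultrafilter_le_nhds' (U.map f) univ_mem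
  have hdiag : Tendsto f U (𝓝ˢ (diagonal X)) := tendsto_iff_comap.mpr (Ultrafilter.of_le _)
  obtain rfl : z = z' :=
    isClosed_diagonal.mem_of_tendsto_nhds_of_tendsto_nhdsSet hp hdiag
  exact ⟨U, z, hp⟩

theorem Function.iterate_eq_of_le {X : Type*} {T : X → X} {x y : X} {m n : ℕ} (hmn : m ≤ n)
    (h : T^[m] x = T^[m] y) : T^[n] x = T^[n] y := by
  obtain ⟨k, rfl⟩ := Nat.exists_eq_add_of_le hmn
  rw [Nat.add_comm, Function.iterate_add_apply, Function.iterate_add_apply, h]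

theorem infinite_setOf_iterate_mem_of_tendsto {X : Type*} [TopologicalSpace X] [T2Space X]
    {T : X → X} {x y z : X} {U : Ultrafilter ℕ} (hx : Tendsto (fun n => T^[n] x) U (𝓝 z))
    (hy : Tendsto (fun n => T^[n] y) U (𝓝 z)) {G : Set (X × X)} (hG : G ∈ 𝓝ˢ (diagonal X)) :
    {n : ℕ | (T^[n] x, T^[n] y) ∈ G}.Infinite := by
  have hU : {n : ℕ | (T^[n] x, T^[n] y) ∈ G} ∈ U :=
    hx.prodMk_nhds hy (nhds_le_nhdsSet (mem_diagonal z) hG)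
  rcases Set.finite_or_infinite {n : ℕ | (T^[n] x, T^[n] y) ∈ G} with hfin | hinf
  · obtain ⟨n, -, rfl⟩ := U.eq_pure_of_finite_mem hfin hU
    have hn : T^[n] x = T^[n] y :=
      (tendsto_nhds_unique (tendsto_pure_nhds _ n) hx).trans
        (tendsto_nhds_unique (tendsto_pure_nhds _ n) hy).symm
    exact (Set.Ici_infinite n).mono fun k hk =>
      subset_of_mem_nhdsSet hG (Function.iterate_eq_of_le hk hn)
  · exact hinf

theorem proximal_iff_general {X : Type*} [TopologicalSpace X] [CompactSpace X] [T2Space X]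
    (T : X → X) (x y : X) :
    (∀ G ∈ nhdsSet (Set.diagonal X), {n : ℕ | (T^[n] x, T^[n] y) ∈ G}.Infinite) ↔
      ∃ U : Ultrafilter ℕ, ∃ z : X,
        Tendsto (fun n => T^[n] x) U (nhds z) ∧
        Tendsto (fun n => T^[n] y) U (nhds z) := by
  constructor
  · intro h
    obtain ⟨U, z, hU⟩ := exists_ultrafilter_tendsto_diagonal
      (f := fun n => (T^[n] x, T^[n] y)) (comap_neBot fun G hG => (h G hG).nonempty)
    exact ⟨U, z, hU.fst_nhds, hU.snd_nhds⟩
  · rintro ⟨U, z, hx, hy⟩ G hG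
    exact infinite_setOf_iterate_mem_of_tendsto hx hy hG

/-- Two points `x, y` in a compact Hausdorff dynamical system are proximal iff
`T^U(x) = T^U(y)` for some ultrafilter `U`. -/
theorem proximal_iff {X : Type*} [TopologicalSpace X] [CompactSpace X] [T2Space X]
    (T : X → X) (hT : Continuous T) (x y : X) :
    (∀ G ∈ nhdsSet (Set.diagonal X), {n : ℕ | (T^[n] x, T^[n] y) ∈ G}.Infinite) ↔
      ∃ U : Ultrafilter ℕ, ∃ z : X,
        Tendsto (fun n => T^[n] x) U (nhds z) ∧
        Tendsto (fun n => T^[n] y) U (nhds z) :=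
  proximal_iff_general T x y
end

section
/- There exists a nonprincipal idempotent ultrafilter U on ℕ, i.e., a nonprincipal U with U + U = U. -/
/-!
Hindman's construction: the closed subsemigroup of ultrafilters containing all the tails of the
finite-sum sets of the stream `1, 2, 3, …` contains an idempotent (Ellis–Numakura). Such an
idempotent contains a set of positive integers, so it is not `pure 0`, while `pure a` is idempotent
only for `a = 0`.
-/

/-- The sum of two ultrafilters on ℕ:
`X ∈ uadd U V ↔ {m | {n | m + n ∈ X} ∈ V} ∈ U`. -/
def uadd (U V : Ultrafilter ℕ) : Ultrafilter ℕ :=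
  Ultrafilter.bind U (fun m => Ultrafilter.map (fun n => m + n) V)

attribute [local instance] Ultrafilter.add

theorem uadd_eq_add (U V : Ultrafilter ℕ) : uadd U V = U + V :=
  Ultrafilter.coe_injective <| Filter.ext fun X => (Ultrafilter.eventually_add U V (· ∈ X)).symm

theorem Ultrafilter.pure_add_pure {M : Type*} [Add M] (a b : M) :
    (pure a : Ultrafilter M) + pure b = pure (a + b) :=
  Ultrafilter.coe_injective <| Filter.ext fun X => Ultrafilter.eventually_add _ _ (· ∈ X)

theorem Hindman.pos_of_mem_FS {a : Stream' ℕ} (ha : ∀ n, 0 < a.get n) {m : ℕ}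
    (hm : m ∈ Hindman.FS a) : 0 < m := by
  induction hm with
  | head' b => exact ha 0
  | tail' b m _ ih => exact ih fun n => ha (n + 1)
  | cons' b m _ ih => exact Nat.add_pos_left (ha 0) m

/-- There exists a nonprincipal idempotent ultrafilter on ℕ. -/
theorem exists_nonprincipal_idempotent :
    ∃ U : Ultrafilter ℕ, (¬ ∃ a : ℕ, U = pure a) ∧ uadd U U = U := by
  obtain ⟨U, hidem, hFS⟩ := Hindman.exists_idempotent_ultrafilter_le_FS (fun n => n + 1)
  refine ⟨U, ?_, (uadd_eq_add U U).trans hidem⟩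
  rintro ⟨a, rfl⟩
  have ha_pos : 0 < a := Hindman.pos_of_mem_FS (fun n => Nat.succ_pos n) hFS
  have ha_idem : a + a = a := by
    rw [Ultrafilter.pure_add_pure] at hidem
    exact Ultrafilter.pure_injective hidem
  omega
end

section
/- Auslander–Ellis theorem: in any compact Hausdorff dynamical system (X, T), for every x ∈ X there exists a uniformly recurrent point y that is proximal to x. -/
/-!
Take a minimal closed invariant set `K` in the orbit closure of `x`, and let `E` be the
enveloping semigroup of `T`, the closure of `{T^[n]}` in the compact space `X → X`.
The elements `p ∈ E` with `p x ∈ K` form a nonempty compact semigroup under composition,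
so by the Ellis–Numakura lemma it contains an idempotent `u`. Then `y = u x` lies in `K`,
hence is uniformly recurrent, and `u x = u (u x) = u y`; since `T^[N] ∘ u` is a limit of
iterates `T^[N + n]`, this forces `(T^[n] x, T^[n] y)` into every neighbourhood of the
diagonal for arbitrarily large `n`.
-/

open Filter Set Function Topology

section TopologicalDynamics

variable {X : Type*} [TopologicalSpace X] {T : X → X}

def IsMinimalSet (T : X → X) (K : Set X) : Prop :=
  Minimal (fun L : Set X => L.Nonempty ∧ IsClosed L ∧ MapsTo T L L) K

def IsUniformlyRecurrent (T : X → X) (y : X) : Prop :=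
  ∀ G ∈ 𝓝 y, ∃ M : ℕ, ∀ n : ℕ, ∃ k < M, T^[n + k] y ∈ G

def IsProximal (T : X → X) (x y : X) : Prop :=
  ∀ G ∈ 𝓝ˢ (diagonal X), {n : ℕ | (T^[n] x, T^[n] y) ∈ G}.Infinite

def envelopingSemigroup (T : X → X) : Set (X → X) :=
  closure (range fun n => T^[n])

section MinimalSet

theorem exists_isMinimalSet_subset [CompactSpace X] {C : Set X} (hne : C.Nonempty)
    (hC : IsClosed C) (hTC : MapsTo T C C) : ∃ K ⊆ C, IsMinimalSet T K := by
  refine zorn_superset_nonempty {L | L.Nonempty ∧ IsClosed L ∧ MapsTo T L L}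
    (fun c hc hchain hcne => ?_) C ⟨hne, hC, hTC⟩
  have : Nonempty c := hcne.to_subtype
  have hdir : DirectedOn (· ⊇ ·) c := IsChain.directedOn hchain.symm
  refine ⟨⋂₀ c, ⟨?_, isClosed_sInter fun L hL => (hc hL).2.1,
    fun z hz L hL => (hc hL).2.2 (hz L hL)⟩, fun L hL => sInter_subset_of_mem hL⟩
  exact IsCompact.nonempty_sInter_of_directed_nonempty_isCompact_isClosed
    hdir (fun L hL => (hc hL).1) (fun L hL => (hc hL).2.1.isCompact)
    (fun L hL => (hc hL).2.1)

variable {K : Set X}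

/-- The points of `K` whose forward orbit avoids `U` form a closed invariant subset of `K`,
which misses the points of `K ∩ U`; by minimality it is empty. -/
theorem IsMinimalSet.subset_iUnion_preimage_iterate (hK : IsMinimalSet T K) (hT : Continuous T)
    {U : Set X} (hU : IsOpen U) (hKU : (K ∩ U).Nonempty) : K ⊆ ⋃ k, T^[k] ⁻¹' U := by
  obtain ⟨-, hK_closed, hK_maps⟩ := hK.prop
  set A := K ∩ ⋂ k, (T^[k] ⁻¹' U)ᶜ
  have hA_closed : IsClosed A :=
    hK_closed.inter (isClosed_iInter fun k => (hU.preimage (hT.iterate k)).isClosed_compl)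
  have hA_maps : MapsTo T A A := fun z ⟨hzK, hz⟩ =>
    ⟨hK_maps hzK, mem_iInter.2 fun k => by
      simpa only [mem_compl_iff, mem_preimage, iterate_succ_apply] using mem_iInter.1 hz (k + 1)⟩
  intro z hzK
  by_contra hz
  have hzA : z ∈ A :=
    ⟨hzK, by simpa only [mem_iInter, mem_compl_iff, mem_iUnion, not_exists] using hz⟩
  obtain ⟨y, hyK, hyU⟩ := hKU
  have hyA : y ∈ A := hK.le_of_le ⟨⟨z, hzA⟩, hA_closed, hA_maps⟩ inter_subset_left hyK
  exact mem_iInter.1 hyA.2 0 hyU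

theorem IsMinimalSet.isUniformlyRecurrent [CompactSpace X] (hK : IsMinimalSet T K)
    (hT : Continuous T) {y : X} (hy : y ∈ K) : IsUniformlyRecurrent T y := by
  obtain ⟨-, hK_closed, hK_maps⟩ := hK.prop
  intro G hG
  obtain ⟨U, hUG, hU, hyU⟩ := mem_nhds_iff.1 hG
  obtain ⟨t, ht⟩ := hK_closed.isCompact.elim_finite_subcover (fun k => T^[k] ⁻¹' U)
    (fun k => hU.preimage (hT.iterate k)) (hK.subset_iUnion_preimage_iterate hT hU ⟨y, hy, hyU⟩)
  refine ⟨t.sup id + 1, fun n => ?_⟩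
  obtain ⟨k, hkt, hk⟩ := mem_iUnion₂.1 (ht (hK_maps.iterate n hy))
  refine ⟨k, Nat.lt_succ_of_le (Finset.le_sup (f := id) hkt), hUG ?_⟩
  rwa [add_comm, iterate_add_apply]

end MinimalSet

theorem iterate_comp_mem_closure (hT : Continuous T) {u : X → X}
    (hu : u ∈ envelopingSemigroup T) (N : ℕ) :
    T^[N] ∘ u ∈ closure (range fun n => T^[N + n]) := by
  refine map_mem_closure (continuous_pi fun z => (hT.iterate N).comp (continuous_apply z)) hu ?_
  rintro _ ⟨n, rfl⟩
  exact ⟨n, iterate_add T N n⟩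

theorem comp_mem_envelopingSemigroup (hT : Continuous T) {p q : X → X}
    (hp : p ∈ envelopingSemigroup T) (hq : q ∈ envelopingSemigroup T) :
    p ∘ q ∈ envelopingSemigroup T := by
  have hmaps : MapsTo (· ∘ q) (range fun n => T^[n]) (envelopingSemigroup T) := by
    rintro _ ⟨n, rfl⟩
    exact closure_mono (range_subset_iff.2 fun m => mem_range.2 ⟨n + m, rfl⟩)
      (iterate_comp_mem_closure hT hq n)
  exact hmaps.closure_left (continuous_pi fun z => continuous_apply (q z)) isClosed_closure hp

theorem mapsTo_of_mem_envelopingSemigroup {p : X → X} (hp : p ∈ envelopingSemigroup T)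
    {K : Set X} (hK : IsClosed K) (hTK : MapsTo T K K) : MapsTo p K K := fun z hz =>
  MapsTo.closure_left (f := fun f : X → X => f z)
    (by rintro _ ⟨n, rfl⟩; exact hTK.iterate n hz) (continuous_apply z) hK hp

theorem closure_orbit_subset_image_envelopingSemigroup [CompactSpace X] [T2Space X] (x : X) :
    closure (range fun n => T^[n] x) ⊆ (fun f => f x) '' envelopingSemigroup T :=
  closure_minimal (by rintro _ ⟨n, rfl⟩; exact ⟨T^[n], subset_closure ⟨n, rfl⟩, rfl⟩)
    (isClosed_closure.isCompact.image (continuous_apply x)).isClosed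

theorem exists_comp_self_eq_of_isCompact [T2Space X] {S : Set (X → X)} (hne : S.Nonempty)
    (hS : IsCompact S) (hmul : ∀ p ∈ S, ∀ q ∈ S, p ∘ q ∈ S) : ∃ u ∈ S, u ∘ u = u := by
  let : Semigroup (X → X) := { mul := (· ∘ ·), mul_assoc := fun _ _ _ => rfl }
  exact exists_idempotent_in_compact_subsemigroup
    (fun q => continuous_pi fun z => continuous_apply (q z)) S hne hS hmul

theorem isProximal_of_mem_envelopingSemigroup (hT : Continuous T) {u : X → X}
    (hu : u ∈ envelopingSemigroup T) {x y : X} (hxy : u x = u y) : IsProximal T x y := by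
  intro G hG
  obtain ⟨U, hU, hdiag, hUG⟩ := mem_nhdsSet_iff_exists.1 hG
  refine Nat.frequently_atTop_iff_infinite.1 (frequently_atTop.2 fun N => ?_)
  have hU_eval : IsOpen {f : X → X | (f x, f y) ∈ U} :=
    hU.preimage ((continuous_apply x).prodMk (continuous_apply y))
  have hNu : (T^[N] (u x), T^[N] (u y)) ∈ U := hdiag (by rw [mem_diagonal_iff, hxy])
  obtain ⟨_, hfU, n, rfl⟩ := mem_closure_iff.1 (iterate_comp_mem_closure hT hu N) _ hU_eval hNu
  exact ⟨N + n, N.le_add_right n, hUG hfU⟩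

end TopologicalDynamics

/-- Auslander–Ellis theorem: every point of a compact Hausdorff dynamical system
is proximal to a uniformly recurrent point. -/
theorem auslander_ellis {X : Type*} [TopologicalSpace X] [CompactSpace X] [T2Space X]
    (T : X → X) (hT : Continuous T) (x : X) :
    ∃ y : X,
      (∀ G ∈ nhds y, ∃ M : ℕ, ∀ n : ℕ, ∃ k < M, T^[n + k] y ∈ G) ∧
      (∀ G ∈ nhdsSet (Set.diagonal X), {n : ℕ | (T^[n] x, T^[n] y) ∈ G}.Infinite) := by
  have hT_orbit : MapsTo T (range fun n => T^[n] x) (range fun n => T^[n] x) := by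
    rintro _ ⟨n, rfl⟩
    exact mem_range.2 ⟨n + 1, iterate_succ_apply' T n x⟩
  obtain ⟨K, hK_orbit, hK⟩ :=
    exists_isMinimalSet_subset ⟨x, subset_closure (mem_range_self 0)⟩ isClosed_closure
      (hT_orbit.closure hT)
  obtain ⟨⟨k, hk⟩, hK_closed, hK_maps⟩ := hK.prop
  set S := {p ∈ envelopingSemigroup T | p x ∈ K}
  have hS_nonempty : S.Nonempty := by
    obtain ⟨p, hp, rfl⟩ := closure_orbit_subset_image_envelopingSemigroup x (hK_orbit hk)
    exact ⟨p, hp, hk⟩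
  have hS_compact : IsCompact S :=
    (isClosed_closure.inter (hK_closed.preimage (continuous_apply x))).isCompact
  have hS_comp : ∀ p ∈ S, ∀ q ∈ S, p ∘ q ∈ S := fun p hp q hq =>
    ⟨comp_mem_envelopingSemigroup hT hp.1 hq.1,
      mapsTo_of_mem_envelopingSemigroup hp.1 hK_closed hK_maps hq.2⟩
  obtain ⟨u, ⟨hu, hux⟩, huu⟩ :=
    exists_comp_self_eq_of_isCompact hS_nonempty hS_compact hS_comp
  exact ⟨u x, hK.isUniformlyRecurrent hT hux,
    isProximal_of_mem_envelopingSemigroup hT hu (congrFun huu x).symm⟩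
end
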